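/- Let m ≥ 1 and λ ≥ 0 be real numbers. Then for all a, b ∈ ℝ: |G_λ(a)^m − G_λ(b)^m| ≤ |a^m − b^m|, where the powers are signed powers. -/
import Mathlib


/-- The signed truncator `G_λ(s) = sign(s) · max(|s| − λ, 0)`. -/
noncomputable def Gtrunc (lam s : ℝ) : ℝ := Real.sign s * max (|s| - lam) 0

/-- The signed power `r^β := |r|^(β−1) · r` for a real exponent `β > 0`. -/
noncomputable def spow (r β : ℝ) : ℝ := |r| ^ (β - 1) * r

lemma spow_of_nonneg {r : ℝ} (m : ℝ) (hm : 1 ≤ m) (hr : 0 ≤ r) :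
    spow r m = r ^ m := by
  rcases eq_or_lt_of_le hr with h | h
  · simp [spow, ← h, Real.zero_rpow (by linarith : m ≠ 0)]
  · have h1 := Real.rpow_add_one h.ne' (m - 1)
    rw [show m - 1 + 1 = m by ring] at h1
    rw [spow, abs_of_pos h, h1]

lemma spow_neg (r m : ℝ) : spow (-r) m = -spow r m := by
  simp [spow, abs_neg]

lemma Gtrunc_of_nonneg {lam s : ℝ} (hlam : 0 ≤ lam) (hs : 0 ≤ s) :
    Gtrunc lam s = max (s - lam) 0 := by
  rcases eq_or_lt_of_le hs with h | h
  · simp [Gtrunc, ← h, max_eq_right (by linarith : -lam ≤ (0:ℝ))]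
  · rw [Gtrunc, Real.sign_of_pos h, abs_of_pos h, one_mul]

lemma Gtrunc_neg (lam s : ℝ) : Gtrunc lam (-s) = -Gtrunc lam s := by
  simp [Gtrunc, Real.sign_neg, abs_neg]

lemma Gtrunc_nonneg {lam s : ℝ} (hlam : 0 ≤ lam) (hs : 0 ≤ s) : 0 ≤ Gtrunc lam s := by
  rw [Gtrunc_of_nonneg hlam hs]; exact le_max_right _ _

/-- The increment `t ↦ (t+d)^m − t^m` is monotone on `[0,∞)` for `m ≥ 1`, `d ≥ 0`. -/
lemma incr_mono (m d : ℝ) (hm : 1 ≤ m) (hd : 0 ≤ d) :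
    MonotoneOn (fun t : ℝ => (t + d) ^ m - t ^ m) (Set.Ici 0) := by
  have hm0 : (0:ℝ) ≤ m := by linarith
  have hder : ∀ x : ℝ, HasDerivAt (fun t : ℝ => (t + d) ^ m - t ^ m)
      (1 * m * (x + d) ^ (m - 1) - 1 * m * x ^ (m - 1)) x := by
    intro x
    have h1 : HasDerivAt (fun t : ℝ => (t + d) ^ m) (1 * m * (x + d) ^ (m - 1)) x :=
      ((hasDerivAt_id x).add_const d).rpow_const (Or.inr hm)
    have h2 : HasDerivAt (fun t : ℝ => t ^ m) (1 * m * x ^ (m - 1)) x :=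
      (hasDerivAt_id x).rpow_const (Or.inr hm)
    exact h1.sub h2
  apply monotoneOn_of_deriv_nonneg (convex_Ici 0)
  · exact fun x _ => (hder x).continuousAt.continuousWithinAt
  · intro x _
    exact ((hder x).differentiableAt).differentiableWithinAt
  · intro x hx
    rw [interior_Ici] at hx
    rw [(hder x).deriv]
    have h : x ^ (m - 1) ≤ (x + d) ^ (m - 1) :=
      Real.rpow_le_rpow hx.le (by linarith) (by linarith)
    nlinarith

/-- `t ↦ t^m − max(t−λ,0)^m` is monotone on `[0,∞)`. -/
lemma psi_mono (m lam : ℝ) (hm : 1 ≤ m) (hlam : 0 ≤ lam) :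
    MonotoneOn (fun t : ℝ => t ^ m - (max (t - lam) 0) ^ m) (Set.Ici 0) := by
  have hm0 : (0:ℝ) ≤ m := by linarith
  intro x hx y hy hxy
  simp only [Set.mem_Ici] at hx hy
  set u := max (x - lam) 0 with hu_def
  set v := max (y - lam) 0 with hv_def
  have hu : 0 ≤ u := le_max_right _ _
  have hv : 0 ≤ v := le_max_right _ _
  have huv : u ≤ v := max_le_max (by linarith) le_rfl
  have hux : u ≤ x := max_le (by linarith) hx
  have hdle : v - u ≤ y - x := by
    have h1 : x - lam ≤ u := le_max_left _ _
    have h2 : v ≤ u + (y - x) := max_le (by linarith) (by linarith)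
    linarith
  have hd0 : (0:ℝ) ≤ v - u := by linarith
  have k := incr_mono m (v - u) hm hd0 (Set.mem_Ici.2 hu) (Set.mem_Ici.2 hx) hux
  simp only at k ⊢
  have huv' : u + (v - u) = v := by ring
  rw [huv'] at k
  have h2 : (x + (v - u)) ^ m ≤ y ^ m :=
    Real.rpow_le_rpow (by linarith) (by linarith) hm0
  linarith

lemma psi_nonneg (m lam : ℝ) (hm : 1 ≤ m) (hlam : 0 ≤ lam) {t : ℝ} (ht : 0 ≤ t) :
    0 ≤ t ^ m - (max (t - lam) 0) ^ m := by
  have h : max (t - lam) 0 ≤ t := max_le (by linarith) ht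
  have := Real.rpow_le_rpow (le_max_right (t - lam) 0) h (by linarith : (0:ℝ) ≤ m)
  linarith

lemma phi_eq (m lam : ℝ) (hm : 1 ≤ m) (hlam : 0 ≤ lam) {r : ℝ} (hr : 0 ≤ r) :
    spow r m - spow (Gtrunc lam r) m = r ^ m - (max (r - lam) 0) ^ m := by
  rw [spow_of_nonneg m hm hr, Gtrunc_of_nonneg hlam hr,
    spow_of_nonneg m hm (le_max_right _ _)]

lemma phi_neg (m lam r : ℝ) :
    spow (-r) m - spow (Gtrunc lam (-r)) m = -(spow r m - spow (Gtrunc lam r) m) := by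
  rw [spow_neg, Gtrunc_neg, spow_neg]; ring

lemma phi_mono (m lam : ℝ) (hm : 1 ≤ m) (hlam : 0 ≤ lam) :
    Monotone (fun r : ℝ => spow r m - spow (Gtrunc lam r) m) := by
  intro x y hxy
  simp only
  rcases le_or_gt 0 x with hx | hx
  · rw [phi_eq m lam hm hlam hx, phi_eq m lam hm hlam (hx.trans hxy)]
    exact psi_mono m lam hm hlam (Set.mem_Ici.2 hx) (Set.mem_Ici.2 (hx.trans hxy)) hxy
  rcases le_or_gt 0 y with hy | hy
  · have e1 : spow x m - spow (Gtrunc lam x) m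
        = -(spow (-x) m - spow (Gtrunc lam (-x)) m) := by rw [phi_neg]; ring
    rw [e1, phi_eq m lam hm hlam (by linarith : (0:ℝ) ≤ -x), phi_eq m lam hm hlam hy]
    have ha := psi_nonneg m lam hm hlam (by linarith : (0:ℝ) ≤ -x)
    have hb := psi_nonneg m lam hm hlam hy
    linarith
  · have e1 : spow x m - spow (Gtrunc lam x) m
        = -(spow (-x) m - spow (Gtrunc lam (-x)) m) := by rw [phi_neg]; ring
    have e2 : spow y m - spow (Gtrunc lam y) m
        = -(spow (-y) m - spow (Gtrunc lam (-y)) m) := by rw [phi_neg]; ring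
    rw [e1, e2, neg_le_neg_iff]
    rw [phi_eq m lam hm hlam (by linarith : (0:ℝ) ≤ -x),
      phi_eq m lam hm hlam (by linarith : (0:ℝ) ≤ -y)]
    exact psi_mono m lam hm hlam (Set.mem_Ici.2 (by linarith)) (Set.mem_Ici.2 (by linarith))
      (by linarith)

lemma spow_mono (m : ℝ) (hm : 1 ≤ m) : Monotone (fun r : ℝ => spow r m) := by
  have hm0 : (0:ℝ) ≤ m := by linarith
  intro x y hxy
  simp only
  rcases le_or_gt 0 x with hx | hx
  · rw [spow_of_nonneg m hm hx, spow_of_nonneg m hm (hx.trans hxy)]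
    exact Real.rpow_le_rpow hx hxy hm0
  rcases le_or_gt 0 y with hy | hy
  · have h1 : spow x m ≤ 0 := by
      have ex : spow x m = -spow (-x) m := by rw [spow_neg]; ring
      rw [ex, spow_of_nonneg m hm (by linarith : (0:ℝ) ≤ -x)]
      have : (0:ℝ) ≤ (-x) ^ m := Real.rpow_nonneg (by linarith) m
      linarith
    have h2 : 0 ≤ spow y m := by
      rw [spow_of_nonneg m hm hy]; positivity
    linarith
  · have ex : spow x m = -spow (-x) m := by rw [spow_neg]; ring
    have ey : spow y m = -spow (-y) m := by rw [spow_neg]; ring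
    rw [ex, ey, neg_le_neg_iff, spow_of_nonneg m hm (by linarith : (0:ℝ) ≤ -x),
      spow_of_nonneg m hm (by linarith : (0:ℝ) ≤ -y)]
    exact Real.rpow_le_rpow (by linarith) (by linarith) hm0

lemma Gtrunc_mono (lam : ℝ) (hlam : 0 ≤ lam) : Monotone (Gtrunc lam) := by
  intro x y hxy
  rcases le_or_gt 0 x with hx | hx
  · rw [Gtrunc_of_nonneg hlam hx, Gtrunc_of_nonneg hlam (hx.trans hxy)]
    exact max_le_max (by linarith) le_rfl
  rcases le_or_gt 0 y with hy | hy
  · have h1 : Gtrunc lam x ≤ 0 := by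
      have ex : Gtrunc lam x = -Gtrunc lam (-x) := by rw [Gtrunc_neg]; ring
      rw [ex]
      have := Gtrunc_nonneg hlam (by linarith : (0:ℝ) ≤ -x) (lam := lam)
      linarith
    have h2 := Gtrunc_nonneg hlam hy (lam := lam)
    linarith
  · have ex : Gtrunc lam x = -Gtrunc lam (-x) := by rw [Gtrunc_neg]; ring
    have ey : Gtrunc lam y = -Gtrunc lam (-y) := by rw [Gtrunc_neg]; ring
    rw [ex, ey, neg_le_neg_iff, Gtrunc_of_nonneg hlam (by linarith : (0:ℝ) ≤ -x),
      Gtrunc_of_nonneg hlam (by linarith : (0:ℝ) ≤ -y)]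
    exact max_le_max (by linarith) le_rfl

/-- For `m ≥ 1` and `λ ≥ 0`, truncation at level `λ` contracts differences of
`m`-th signed powers: `|G_λ(a)^m − G_λ(b)^m| ≤ |a^m − b^m|` for all `a, b ∈ ℝ`. -/
theorem stmt4 (m lam : ℝ) (hm : 1 ≤ m) (hlam : 0 ≤ lam) (a b : ℝ) :
    |spow (Gtrunc lam a) m - spow (Gtrunc lam b) m| ≤ |spow a m - spow b m| := by
  wlog hab : b ≤ a generalizing a b
  · rw [abs_sub_comm, abs_sub_comm (spow a m)]
    exact this b a (le_of_not_ge hab)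
  have h1 : spow b m ≤ spow a m := spow_mono m hm hab
  have h2 : spow (Gtrunc lam b) m ≤ spow (Gtrunc lam a) m :=
    spow_mono m hm (Gtrunc_mono lam hlam hab)
  rw [abs_of_nonneg (by linarith), abs_of_nonneg (by linarith)]
  have h3 := phi_mono m lam hm hlam hab
  simp only at h3
  linarith
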